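/- Negativity of the initial slope of the first Riemann invariant (Lemma 3.3). Let ρ₀, c₀ : ℝ → ℝ with ρ₀ differentiable at x₀, c₀ twice differentiable at x₀, ρ₀(x₀) > 0 and c₀(x₀) > 0, and suppose ∂ₓρ₀(x₀) ≤ 0 and c₀(x₀) ∂ₓₓc₀(x₀) < (∂ₓc₀(x₀))². Set q₀ := ∂ₓc₀ / c₀ and z₀ := (ρ₀(x₀), q₀(x₀)) ∈ Ω. Let w₁ : Ω → ℝ be differentiable at z₀ with ∂w₁/∂z₁(z₀) > 0 and ∇w₁(z₀) · r₁(z₀) = 0. Then the function P₀(x) := w₁(ρ₀(x), q₀(x)) satisfies ∂ₓP₀(x₀) < 0. -/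

import Mathlib

/-- The half-plane `Ω = {(z₁,z₂) ∈ ℝ² : z₁ > 0}`. -/
def Omega : Set (ℝ × ℝ) := {z : ℝ × ℝ | 0 < z.1}

/-- The eigenvalue `λ₁(z₁,z₂) = (z₂ − √(z₂² + 4z₁))/2` of `[[z₂, z₁],[1,0]]`. -/
noncomputable def lam1 (z : ℝ × ℝ) : ℝ := (z.2 - Real.sqrt (z.2 ^ 2 + 4 * z.1)) / 2

/-!
Write `z₀ = (ρ₀(x₀), q₀(x₀))`, `A = Dw₁(z₀)` and `λ = λ₁(z₀)`. Since `A` kills `r₁ = (λ, 1)`,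
`A (a, b) = (a - λ b) · ∂w₁/∂z₁(z₀)`, so by the chain rule
`∂ₓP₀(x₀) = (∂ₓρ₀(x₀) - λ ∂ₓq₀(x₀)) · ∂w₁/∂z₁(z₀)`.
On `Ω` the eigenvalue `λ` is negative, and `∂ₓq₀ = (c₀ ∂ₓₓc₀ - (∂ₓc₀)²) / c₀²` is negative at `x₀`,
so the first factor is negative and the second positive.
-/

theorem lam1_neg_of_mem_Omega {z : ℝ × ℝ} (hz : z ∈ Omega) : lam1 z < 0 := by
  have hsq : z.2 ^ 2 < z.2 ^ 2 + 4 * z.1 := by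
    have : 0 < z.1 := hz
    linarith
  have hlt : z.2 < Real.sqrt (z.2 ^ 2 + 4 * z.1) :=
    calc z.2 ≤ |z.2| := le_abs_self _
      _ = Real.sqrt (z.2 ^ 2) := (Real.sqrt_sq_eq_abs _).symm
      _ < Real.sqrt (z.2 ^ 2 + 4 * z.1) := Real.sqrt_lt_sqrt (sq_nonneg _) hsq
  rw [lam1]
  linarith

theorem LinearMapClass.map_prod_eq_of_map_eq_zero {R M F : Type*} [CommRing R]
    [AddCommGroup M] [Module R M] [FunLike F (R × R) M] [LinearMapClass F R (R × R) M]
    (A : F) {l : R} (hA : A (l, 1) = 0) (a b : R) :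
    A (a, b) = (a - l * b) • A (1, 0) := by
  have hsplit : ((a, b) : R × R) = (a - l * b) • ((1 : R), (0 : R)) + b • ((l, 1) : R × R) := by
    ext <;> simp; ring
  rw [hsplit, map_add, map_smul, map_smul, hA, smul_zero, add_zero]

theorem hasDerivAt_deriv_div_self {c : ℝ → ℝ} {x : ℝ} (hc : DifferentiableAt ℝ c x)
    (hc' : DifferentiableAt ℝ (deriv c) x) (hcx : c x ≠ 0) :
    HasDerivAt (fun y => deriv c y / c y)
      ((c x * deriv (deriv c) x - deriv c x ^ 2) / c x ^ 2) x :=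
  (hc'.hasDerivAt.div hc.hasDerivAt hcx).congr_deriv (by ring)

/-- **Lemma 3.3** (Negativity of the initial slope of the first Riemann invariant). If
`∂ₓρ₀(x₀) ≤ 0` and `c₀(x₀)∂ₓₓc₀(x₀) < (∂ₓc₀(x₀))²`, then `P₀ := w₁(ρ₀, ∂ₓc₀/c₀)` satisfies
`∂ₓP₀(x₀) < 0`. -/
theorem initial_slope_riemann_invariant_neg
    (ρ₀ c₀ : ℝ → ℝ) (x₀ : ℝ)
    (hρ₀diff : DifferentiableAt ℝ ρ₀ x₀)
    (hc₀diff : DifferentiableAt ℝ c₀ x₀)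
    (hc₀diff2 : DifferentiableAt ℝ (deriv c₀) x₀)
    (hρ₀pos : 0 < ρ₀ x₀) (hc₀pos : 0 < c₀ x₀)
    (hslope : deriv ρ₀ x₀ ≤ 0)
    (hconc : c₀ x₀ * deriv (deriv c₀) x₀ < (deriv c₀ x₀) ^ 2)
    (w₁ : ℝ × ℝ → ℝ)
    (hw₁diff : DifferentiableAt ℝ w₁ (ρ₀ x₀, deriv c₀ x₀ / c₀ x₀))
    (hw₁pos : 0 < fderiv ℝ w₁ (ρ₀ x₀, deriv c₀ x₀ / c₀ x₀) ((1 : ℝ), (0 : ℝ)))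
    (hw₁r₁ : fderiv ℝ w₁ (ρ₀ x₀, deriv c₀ x₀ / c₀ x₀)
      (lam1 (ρ₀ x₀, deriv c₀ x₀ / c₀ x₀), 1) = 0) :
    deriv (fun x => w₁ (ρ₀ x, deriv c₀ x / c₀ x)) x₀ < 0 := by
  set q' := (c₀ x₀ * deriv (deriv c₀) x₀ - deriv c₀ x₀ ^ 2) / c₀ x₀ ^ 2
  have hq' : q' < 0 := div_neg_of_neg_of_pos (by linarith) (by positivity)
  have hlam : lam1 (ρ₀ x₀, deriv c₀ x₀ / c₀ x₀) < 0 := lam1_neg_of_mem_Omega hρ₀pos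
  have hP : HasDerivAt (fun x => w₁ (ρ₀ x, deriv c₀ x / c₀ x))
      (fderiv ℝ w₁ (ρ₀ x₀, deriv c₀ x₀ / c₀ x₀) (deriv ρ₀ x₀, q')) x₀ :=
    hw₁diff.hasFDerivAt.comp_hasDerivAt x₀ <| hρ₀diff.hasDerivAt.prodMk <|
      hasDerivAt_deriv_div_self hc₀diff hc₀diff2 hc₀pos.ne'
  rw [hP.deriv, LinearMapClass.map_prod_eq_of_map_eq_zero _ hw₁r₁, smul_eq_mul]
  exact mul_neg_of_neg_of_pos (by nlinarith) hw₁pos
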